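/- arXiv:1405.6537 — 3 statements merged into one kernel-verified Lean document; each statement's English description precedes it below -/
import Mathlib

section
/- If ψ_k ~ k^{-(1+α)/2} with 0 < α < 1, then the covariance r(n) = ∑_{k=0}^∞ ψ_k ψ_{k+n} satisfies r(n) ~ b_α n^{-α} as n → ∞, where b_α = ∫₀^∞ x^{-(1+α)/2}(1+x)^{-(1+α)/2} dx. -/
/-!
Write `β = (1 + α) / 2`, so that `α = 2β - 1 < β`. For the pure power weights `k ^ (-β)` the
covariance is `∑ₖ k ^ (-β) (n + k) ^ (-β)`, a sum of values of the decreasing kernel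
`x ^ (-β) (n + x) ^ (-β)`; by the integral test it differs by `O(n ^ (-β))` from the integral of
the kernel, which the substitution `x = n y` turns into `n ^ (1 - 2β) b_α = n ^ (-α) b_α`.
For general `ψ`, once `k` is large the products `ψ k ψ (k + n)` are within a factor `1 ± δ` of
`k ^ (-β) (k + n) ^ (-β)` uniformly in `n`, while each of the finitely many remaining terms is
`O(n ^ (-β)) = o(n ^ (-α))`.
-/

open Filter MeasureTheory Set Topology

theorem summable_of_abs_sub_le_mul {f w : ℕ → ℝ} {δ : ℝ} {K : ℕ} (hw : Summable w)
    (h : ∀ k ≥ K, |f k - w k| ≤ δ * w k) : Summable f := by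
  have hfw : Summable (fun k => f k - w k) :=
    (hw.mul_left δ).of_norm_bounded_eventually <| by
      rw [Nat.cofinite_eq_atTop]
      exact eventually_atTop.2 ⟨K, h⟩
  simpa using hfw.add hw

theorem abs_tsum_sub_tsum_sub_sum_le {f w : ℕ → ℝ} {δ : ℝ} {K : ℕ} (hw : Summable w)
    (h : ∀ k ≥ K, |f k - w k| ≤ δ * w k) :
    |∑' k, f k - ∑' k, w k - ∑ k ∈ Finset.range K, (f k - w k)| ≤
      δ * (∑' k, w k - ∑ k ∈ Finset.range K, w k) := by
  have hf := summable_of_abs_sub_le_mul hw h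
  have hwK := ((summable_nat_add_iff K).2 hw).mul_left δ
  have hfwK := (summable_nat_add_iff K).2 (hf.sub hw)
  have htail : ∀ k, |f (k + K) - w (k + K)| ≤ δ * w (k + K) := fun k => h _ (by omega)
  rw [← hf.tsum_sub hw, ← (hf.sub hw).sum_add_tsum_nat_add K, ← hw.sum_add_tsum_nat_add K,
    add_sub_cancel_left, add_sub_cancel_left, ← tsum_mul_left, abs_le, ← tsum_neg]
  exact ⟨hwK.neg.tsum_le_tsum (fun k => neg_le_of_abs_le (htail k)) hfwK,
    hfwK.tsum_le_tsum (fun k => le_of_abs_le (htail k)) hwK⟩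

theorem tendsto_mul_tsum_of_forall_abs_sub_le {c : ℕ → ℝ} {f w : ℕ → ℕ → ℝ} {L : ℝ}
    (hc : ∀ n, 0 ≤ c n) (hw : ∀ n, Summable (w n))
    (hfw : ∀ δ > 0, ∀ᶠ k in atTop, ∀ n, |f n k - w n k| ≤ δ * w n k)
    (hf : ∀ k, Tendsto (fun n => c n * f n k) atTop (𝓝 0))
    (hw₀ : ∀ k, Tendsto (fun n => c n * w n k) atTop (𝓝 0))
    (hL : Tendsto (fun n => c n * ∑' k, w n k) atTop (𝓝 L)) :
    Tendsto (fun n => c n * ∑' k, f n k) atTop (𝓝 L) := by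
  suffices hdiff : Tendsto (fun n => c n * ∑' k, f n k - c n * ∑' k, w n k) atTop (𝓝 0) by
    simpa using hdiff.add hL
  refine Metric.tendsto_nhds.2 fun ε hε => ?_
  set δ := ε / (|L| + 1)
  have hδ : 0 < δ := by positivity
  have hδL : δ * L < ε :=
    calc δ * L ≤ δ * |L| := mul_le_mul_of_nonneg_left (le_abs_self L) hδ.le
      _ < δ * (|L| + 1) := by gcongr; linarith
      _ = ε := div_mul_cancel₀ ε (by positivity)
  obtain ⟨K, hK⟩ := eventually_atTop.1 (hfw δ hδ)
  have hbound : Tendsto (fun n => |∑ k ∈ Finset.range K, (c n * f n k - c n * w n k)| +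
      δ * (c n * ∑' k, w n k - ∑ k ∈ Finset.range K, c n * w n k)) atTop (𝓝 (δ * L)) := by
    have hhead := tendsto_finsetSum (Finset.range K) fun k _ => (hf k).sub (hw₀ k)
    have hheadw := tendsto_finsetSum (Finset.range K) fun k _ => hw₀ k
    simpa using hhead.abs.add ((hL.sub hheadw).const_mul δ)
  filter_upwards [hbound.eventually (gt_mem_nhds hδL)] with n hn
  have key := abs_tsum_sub_tsum_sub_sum_le (hw n) fun k hk => hK k hk n
  calc dist (c n * ∑' k, f n k - c n * ∑' k, w n k) 0
      = c n * |∑' k, f n k - ∑' k, w n k| := by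
        rw [dist_zero_right, Real.norm_eq_abs, ← mul_sub, abs_mul, abs_of_nonneg (hc n)]
    _ ≤ c n * (|∑ k ∈ Finset.range K, (f n k - w n k)| +
          δ * (∑' k, w n k - ∑ k ∈ Finset.range K, w n k)) := by
        refine mul_le_mul_of_nonneg_left ?_ (hc n)
        linarith [abs_sub_abs_le_abs_sub (∑' k, f n k - ∑' k, w n k)
          (∑ k ∈ Finset.range K, (f n k - w n k))]
    _ = |∑ k ∈ Finset.range K, (c n * f n k - c n * w n k)| +
          δ * (c n * ∑' k, w n k - ∑ k ∈ Finset.range K, c n * w n k) := by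
        simp only [← mul_sub, ← Finset.mul_sum, abs_mul, abs_of_nonneg (hc n)]
        ring
    _ < ε := hn

theorem abs_mul_sub_mul_le {a b x y η : ℝ} (hx : 0 ≤ x) (hy : 0 ≤ y) (hη0 : 0 ≤ η)
    (hη1 : η ≤ 1) (ha : |a - x| ≤ η * x) (hb : |b - y| ≤ η * y) :
    |a * b - x * y| ≤ 3 * η * (x * y) := by
  rw [abs_le] at ha hb ⊢
  constructor <;> nlinarith [mul_nonneg hx hy, mul_nonneg hη0 (mul_nonneg hx hy)]

theorem eventually_abs_sub_le_mul_of_tendsto_div {ι : Type*} {l : Filter ι} {u v : ι → ℝ}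
    (hv : ∀ᶠ i in l, 0 < v i) (h : Tendsto (fun i => u i / v i) l (𝓝 1)) {δ : ℝ} (hδ : 0 < δ) :
    ∀ᶠ i in l, |u i - v i| ≤ δ * v i := by
  filter_upwards [hv, Metric.tendsto_nhds.1 h δ hδ] with i hvi hi
  rw [Real.dist_eq, div_sub_one hvi.ne', abs_div, abs_of_pos hvi, div_lt_iff₀ hvi] at hi
  exact hi.le

theorem eventually_forall_abs_mul_comp_add_sub_le {ψ v : ℕ → ℝ} (hv : ∀ᶠ k in atTop, 0 < v k)
    (h : Tendsto (fun k => ψ k / v k) atTop (𝓝 1)) {δ : ℝ} (hδ : 0 < δ) :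
    ∀ᶠ k in atTop, ∀ n, |ψ k * ψ (k + n) - v k * v (k + n)| ≤ δ * (v k * v (k + n)) := by
  set η := min (δ / 3) 1
  have hη : 0 < η := lt_min (by positivity) one_pos
  obtain ⟨K, hK⟩ := eventually_atTop.1 (hv.and (eventually_abs_sub_le_mul_of_tendsto_div hv h hη))
  filter_upwards [eventually_ge_atTop K] with k hk n
  obtain ⟨hvk, hψk⟩ := hK k hk
  obtain ⟨hvkn, hψkn⟩ := hK (k + n) (by omega)
  calc |ψ k * ψ (k + n) - v k * v (k + n)| ≤ 3 * η * (v k * v (k + n)) :=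
        abs_mul_sub_mul_le hvk.le hvkn.le hη.le (min_le_right _ _) hψk hψkn
    _ ≤ δ * (v k * v (k + n)) := by
        gcongr
        linarith [min_le_left (δ / 3) 1]

theorem tendsto_natCast_rpow_mul_rpow_neg {a b : ℝ} (h : a < b) :
    Tendsto (fun n : ℕ => (n : ℝ) ^ a * (n : ℝ) ^ (-b)) atTop (𝓝 0) := by
  refine ((tendsto_rpow_neg_atTop (sub_pos.2 h)).comp tendsto_natCast_atTop_atTop).congr' ?_
  filter_upwards [eventually_gt_atTop 0] with n hn
  rw [Function.comp_apply, ← Real.rpow_add (Nat.cast_pos.2 hn)]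
  ring_nf

theorem tendsto_rpow_mul_of_tendsto_div_rpow {ψ : ℕ → ℝ} {a β : ℝ} (hab : a < β)
    (h : Tendsto (fun k : ℕ => ψ k / (k : ℝ) ^ (-β)) atTop (𝓝 1)) :
    Tendsto (fun n : ℕ => (n : ℝ) ^ a * ψ n) atTop (𝓝 0) := by
  have hlim := h.mul (tendsto_natCast_rpow_mul_rpow_neg hab)
  rw [mul_zero] at hlim
  refine hlim.congr' ?_
  filter_upwards [eventually_gt_atTop 0] with n hn
  have : (0 : ℝ) < (n : ℝ) ^ (-β) := by positivity
  field_simp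

theorem tendsto_rpow_mul_comp_add {ψ : ℕ → ℝ} {a : ℝ} (ha : 0 ≤ a)
    (h : Tendsto (fun n : ℕ => (n : ℝ) ^ a * ψ n) atTop (𝓝 0)) (k : ℕ) :
    Tendsto (fun n : ℕ => (n : ℝ) ^ a * ψ (k + n)) atTop (𝓝 0) := by
  refine squeeze_zero_norm (fun n => ?_)
    (tendsto_norm_zero.comp ((tendsto_add_atTop_iff_nat k).2 h))
  rw [Function.comp_apply, norm_mul, norm_mul, add_comm k n]
  refine mul_le_mul_of_nonneg_right ?_ (norm_nonneg _)
  rw [Real.norm_of_nonneg (by positivity), Real.norm_of_nonneg (by positivity)]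
  exact Real.rpow_le_rpow (Nat.cast_nonneg _) (Nat.cast_le.2 (Nat.le_add_right n k)) ha

/-- `covKernel β c 0 = 0`, since `0 ^ (-β) = 0` for `β ≠ 0`: sums over `k : ℕ` start at `k = 1`. -/
noncomputable def covKernel (β c x : ℝ) : ℝ := x ^ (-β) * (c + x) ^ (-β)

section covKernel

variable {β c x : ℝ}

theorem covKernel_nonneg (hc : 0 ≤ c) (hx : 0 ≤ x) : 0 ≤ covKernel β c x := by
  unfold covKernel; positivity

theorem covKernel_le_rpow_mul_rpow (hβ : 0 ≤ β) (hc : 0 < c) (hx : 0 ≤ x) :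
    covKernel β c x ≤ x ^ (-β) * c ^ (-β) :=
  mul_le_mul_of_nonneg_left (Real.rpow_le_rpow_of_nonpos hc (by linarith) (by linarith))
    (by positivity)

theorem covKernel_le_rpow (hβ : 0 ≤ β) (hc : 0 ≤ c) (hx : 0 < x) :
    covKernel β c x ≤ x ^ (-(2 * β)) := by
  calc covKernel β c x ≤ x ^ (-β) * x ^ (-β) :=
        mul_le_mul_of_nonneg_left (Real.rpow_le_rpow_of_nonpos hx (by linarith) (by linarith))
          (by positivity)
    _ = x ^ (-(2 * β)) := by rw [← Real.rpow_add hx]; ring_nf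

theorem antitoneOn_covKernel (hβ : 0 ≤ β) (hc : 0 ≤ c) : AntitoneOn (covKernel β c) (Ioi 0) :=
  fun x (hx : 0 < x) y (hy : 0 < y) hxy => mul_le_mul
    (Real.rpow_le_rpow_of_nonpos hx hxy (by linarith))
    (Real.rpow_le_rpow_of_nonpos (by linarith) (by linarith) (by linarith))
    (Real.rpow_nonneg (by linarith) _) (Real.rpow_nonneg hx.le _)

theorem measurable_covKernel : Measurable (covKernel β c) := by
  unfold covKernel; fun_prop

theorem integrableOn_Ioc_rpow_neg (hβ : β < 1) : IntegrableOn (fun x : ℝ => x ^ (-β)) (Ioc 0 1) :=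
  (intervalIntegral.intervalIntegrable_rpow' (by linarith)).1

theorem integrableOn_Ioc_covKernel (hβ0 : 0 ≤ β) (hβ1 : β < 1) (hc : 0 < c) :
    IntegrableOn (covKernel β c) (Ioc 0 1) := by
  refine ((integrableOn_Ioc_rpow_neg hβ1).mul_const (c ^ (-β))).mono'
    measurable_covKernel.aestronglyMeasurable ?_
  filter_upwards [ae_restrict_mem measurableSet_Ioc] with x hx
  rw [Real.norm_of_nonneg (covKernel_nonneg hc.le hx.1.le)]
  exact covKernel_le_rpow_mul_rpow hβ0 hc hx.1.le

theorem integrableOn_Ioi_one_covKernel (hβ : 1 / 2 < β) (hc : 0 ≤ c) :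
    IntegrableOn (covKernel β c) (Ioi 1) := by
  refine (integrableOn_Ioi_rpow_of_lt (a := -(2 * β)) (by linarith) one_pos).mono'
    measurable_covKernel.aestronglyMeasurable ?_
  filter_upwards [ae_restrict_mem measurableSet_Ioi] with x (hx : 1 < x)
  rw [Real.norm_of_nonneg (covKernel_nonneg hc (by linarith))]
  exact covKernel_le_rpow (by linarith) hc (by linarith)

theorem integrableOn_Ioi_covKernel (hβ0 : 1 / 2 < β) (hβ1 : β < 1) (hc : 0 < c) :
    IntegrableOn (covKernel β c) (Ioi 0) := by
  rw [← Ioc_union_Ioi_eq_Ioi zero_le_one]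
  exact (integrableOn_Ioc_covKernel (by linarith) hβ1 hc).union
    (integrableOn_Ioi_one_covKernel hβ0 hc.le)

theorem integral_Ioi_covKernel_eq_add (hβ0 : 1 / 2 < β) (hβ1 : β < 1) (hc : 0 < c) :
    ∫ x in Ioi 0, covKernel β c x =
      (∫ x in Ioc 0 1, covKernel β c x) + ∫ x in Ioi 1, covKernel β c x := by
  rw [← Ioc_union_Ioi_eq_Ioi zero_le_one, setIntegral_union (Ioc_disjoint_Ioi le_rfl)
    measurableSet_Ioi (integrableOn_Ioc_covKernel (by linarith) hβ1 hc)
    (integrableOn_Ioi_one_covKernel hβ0 hc.le)]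

theorem integral_Ioc_covKernel_le (hβ0 : 0 ≤ β) (hβ1 : β < 1) (hc : 0 < c) :
    ∫ x in Ioc 0 1, covKernel β c x ≤ c ^ (-β) * ∫ x in Ioc (0 : ℝ) 1, x ^ (-β) := by
  rw [← integral_const_mul]
  refine setIntegral_mono_on (integrableOn_Ioc_covKernel hβ0 hβ1 hc) ?_ measurableSet_Ioc
    fun x hx => (covKernel_le_rpow_mul_rpow hβ0 hc hx.1.le).trans_eq (mul_comm _ _)
  exact (integrableOn_Ioc_rpow_neg hβ1).const_mul _

theorem covKernel_self_mul (hc : 0 < c) (hx : 0 ≤ x) :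
    covKernel β c (c * x) = c ^ (-(2 * β)) * covKernel β 1 x := by
  rw [covKernel, covKernel, show c + c * x = c * (1 + x) by ring, Real.mul_rpow hc.le hx,
    Real.mul_rpow hc.le (by linarith), show -(2 * β) = -β + -β by ring, Real.rpow_add hc]
  ring

theorem integral_Ioi_covKernel_eq_rpow_mul (hc : 0 < c) :
    ∫ x in Ioi 0, covKernel β c x = c ^ (1 - 2 * β) * ∫ x in Ioi 0, covKernel β 1 x := by
  have hscale := integral_comp_mul_left_Ioi (covKernel β c) 0 hc
  rw [mul_zero, smul_eq_mul, setIntegral_congr_fun measurableSet_Ioi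
    fun x (hx : 0 < x) => covKernel_self_mul hc hx.le, integral_const_mul] at hscale
  rw [sub_eq_add_neg, Real.rpow_add hc, Real.rpow_one, mul_assoc, hscale, ← mul_assoc,
    mul_inv_cancel₀ hc.ne', one_mul]

theorem integral_Ioi_covKernel_pos (hβ0 : 1 / 2 < β) (hβ1 : β < 1) (hc : 0 < c) :
    0 < ∫ x in Ioi 0, covKernel β c x := by
  refine (setIntegral_pos_iff_support_of_nonneg_ae ?_ (integrableOn_Ioi_covKernel hβ0 hβ1 hc)).2 ?_
  · filter_upwards [ae_restrict_mem measurableSet_Ioi] with x (hx : 0 < x)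
    exact covKernel_nonneg hc.le hx.le
  · have : Ioi (0 : ℝ) ⊆ Function.support (covKernel β c) ∩ Ioi 0 := fun x (hx : 0 < x) =>
      ⟨(by unfold covKernel; positivity : covKernel β c x ≠ 0), hx⟩
    exact (measure_mono this).trans_lt' (by simp)

theorem summable_covKernel (hβ : 1 / 2 < β) (hc : 0 ≤ c) :
    Summable fun k : ℕ => covKernel β c k :=
  AntitoneOn.summable_of_integrableOn_Ioi (N := 1)
    (by exact_mod_cast (antitoneOn_covKernel (by linarith) hc).mono (Ici_subset_Ioi.2 one_pos))
    (by exact_mod_cast integrableOn_Ioi_one_covKernel hβ hc)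
    (fun x hx => covKernel_nonneg hc (by simp at hx; linarith))

theorem integral_Ioi_one_le_tsum_covKernel (hβ : 1 / 2 < β) (hc : 0 ≤ c) :
    ∫ x in Ioi 1, covKernel β c x ≤ ∑' k : ℕ, covKernel β c k := by
  have hsum := summable_covKernel hβ hc
  have h := AntitoneOn.integral_le_tsum_comp_add 1
    (by exact_mod_cast (antitoneOn_covKernel (by linarith) hc).mono (Ici_subset_Ioi.2 one_pos))
    hsum (fun x hx => covKernel_nonneg hc (by simp at hx; linarith))
  rw [hsum.tsum_eq_zero_add]
  push_cast at h ⊢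
  linarith [covKernel_nonneg (β := β) hc le_rfl]

theorem tsum_covKernel_le_rpow_add_integral (hβ : 1 / 2 < β) (hc : 0 < c) :
    ∑' k : ℕ, covKernel β c k ≤ c ^ (-β) + ∫ x in Ioi 1, covKernel β c x := by
  have hsum := summable_covKernel hβ hc.le
  have h := AntitoneOn.tsum_comp_add_le_integral (f := covKernel β c) 1
    (by exact_mod_cast (antitoneOn_covKernel (by linarith) hc.le).mono (Ici_subset_Ioi.2 one_pos))
    (by exact_mod_cast integrableOn_Ioi_one_covKernel hβ hc.le)
    (fun x hx => covKernel_nonneg hc.le (by simp at hx; linarith))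
  have h0 : covKernel β c 0 = 0 := by simp [covKernel, Real.zero_rpow (by linarith : -β ≠ 0)]
  have h1 := covKernel_le_rpow_mul_rpow (by linarith) hc zero_le_one (β := β)
  rw [hsum.tsum_eq_zero_add, ((summable_nat_add_iff 1).2 hsum).tsum_eq_zero_add]
  push_cast at h h0 h1 ⊢
  simp only [Real.one_rpow, one_mul] at h1
  linarith

theorem tendsto_rpow_mul_covKernel {a : ℝ} (hβ : 0 ≤ β) (hab : a < β) (hx : 0 ≤ x) :
    Tendsto (fun n : ℕ => (n : ℝ) ^ a * covKernel β n x) atTop (𝓝 0) := by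
  refine tendsto_of_tendsto_of_tendsto_of_le_of_le' tendsto_const_nhds
    (by simpa using (tendsto_natCast_rpow_mul_rpow_neg hab).const_mul (x ^ (-β))) ?_ ?_
  all_goals filter_upwards [eventually_gt_atTop 0] with n hn
  · exact mul_nonneg (by positivity) (covKernel_nonneg n.cast_nonneg hx)
  · calc (n : ℝ) ^ a * covKernel β n x ≤ (n : ℝ) ^ a * (x ^ (-β) * (n : ℝ) ^ (-β)) :=
          mul_le_mul_of_nonneg_left (covKernel_le_rpow_mul_rpow hβ (Nat.cast_pos.2 hn) hx)
            (by positivity)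
      _ = x ^ (-β) * ((n : ℝ) ^ a * (n : ℝ) ^ (-β)) := by ring

end covKernel

theorem tendsto_rpow_mul_tsum_covKernel {β : ℝ} (hβ0 : 1 / 2 < β) (hβ1 : β < 1) :
    Tendsto (fun n : ℕ => (n : ℝ) ^ (2 * β - 1) * ∑' k : ℕ, covKernel β n k) atTop
      (𝓝 (∫ x in Ioi 0, covKernel β 1 x)) := by
  set I := ∫ x in Ioi 0, covKernel β 1 x
  set C := ∫ x in Ioc (0 : ℝ) 1, x ^ (-β)
  have herr := tendsto_natCast_rpow_mul_rpow_neg (a := 2 * β - 1) (b := β) (by linarith)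
  refine tendsto_of_tendsto_of_tendsto_of_le_of_le' (by simpa using (herr.const_mul C).const_sub I)
    (by simpa using herr.const_add I) ?_ ?_
  all_goals
    filter_upwards [eventually_gt_atTop 0] with n hn
    have hn' : (0 : ℝ) < n := Nat.cast_pos.2 hn
    have hI : (n : ℝ) ^ (2 * β - 1) * ∫ x in Ioi 0, covKernel β n x = I := by
      rw [integral_Ioi_covKernel_eq_rpow_mul hn', ← mul_assoc, ← Real.rpow_add hn',
        show 2 * β - 1 + (1 - 2 * β) = 0 by ring, Real.rpow_zero, one_mul]
    have hsplit := integral_Ioi_covKernel_eq_add hβ0 hβ1 hn'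
    have hP : 0 ≤ (n : ℝ) ^ (2 * β - 1) := by positivity
  · have hhead := integral_Ioc_covKernel_le (by linarith) hβ1 hn'
    have hlow := integral_Ioi_one_le_tsum_covKernel hβ0 hn'.le
    calc I - C * ((n : ℝ) ^ (2 * β - 1) * (n : ℝ) ^ (-β))
        ≤ I - (n : ℝ) ^ (2 * β - 1) * ∫ x in Ioc 0 1, covKernel β n x := by
          nlinarith [mul_le_mul_of_nonneg_left hhead hP]
      _ = (n : ℝ) ^ (2 * β - 1) * ∫ x in Ioi 1, covKernel β n x := by
          rw [← hI, hsplit]; ring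
      _ ≤ _ := mul_le_mul_of_nonneg_left hlow hP
  · have hup := tsum_covKernel_le_rpow_add_integral hβ0 hn'
    have hhead : 0 ≤ ∫ x in Ioc 0 1, covKernel β n x :=
      setIntegral_nonneg measurableSet_Ioc fun x hx => covKernel_nonneg hn'.le hx.1.le
    calc (n : ℝ) ^ (2 * β - 1) * ∑' k : ℕ, covKernel β n k
        ≤ (n : ℝ) ^ (2 * β - 1) * ((n : ℝ) ^ (-β) + ∫ x in Ioi 0, covKernel β n x) := by
          gcongr; linarith
      _ = I + (n : ℝ) ^ (2 * β - 1) * (n : ℝ) ^ (-β) := by rw [mul_add, hI]; ring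

theorem tendsto_rpow_mul_tsum_mul_comp_add {ψ : ℕ → ℝ} {β : ℝ} (hβ0 : 1 / 2 < β) (hβ1 : β < 1)
    (hψ : Tendsto (fun k : ℕ => ψ k / (k : ℝ) ^ (-β)) atTop (𝓝 1)) :
    Tendsto (fun n : ℕ => (n : ℝ) ^ (2 * β - 1) * ∑' k, ψ k * ψ (k + n)) atTop
      (𝓝 (∫ x in Ioi 0, covKernel β 1 x)) := by
  have hab : 2 * β - 1 < β := by linarith
  have hψ₀ := tendsto_rpow_mul_comp_add (by linarith) (tendsto_rpow_mul_of_tendsto_div_rpow hab hψ)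
  refine tendsto_mul_tsum_of_forall_abs_sub_le (w := fun n k => covKernel β n k)
    (fun n => by positivity) (fun n => summable_covKernel hβ0 n.cast_nonneg) (fun δ hδ => ?_)
    (fun k => by simpa [mul_left_comm] using (hψ₀ k).const_mul (ψ k))
    (fun k => tendsto_rpow_mul_covKernel (by linarith) hab k.cast_nonneg)
    (tendsto_rpow_mul_tsum_covKernel hβ0 hβ1)
  have hv : ∀ᶠ k : ℕ in atTop, (0 : ℝ) < (k : ℝ) ^ (-β) := by
    filter_upwards [eventually_gt_atTop 0] with k hk
    positivity
  filter_upwards [eventually_forall_abs_mul_comp_add_sub_le hv hψ hδ] with k hk n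
  simpa [covKernel, add_comm] using hk n

theorem covariance_asymptotic_general (α : ℝ) (hα0 : 0 < α) (hα1 : α < 1)
    (ψ : ℕ → ℝ)
    (hψ : Tendsto (fun k : ℕ => ψ k / (k : ℝ) ^ (-(1 + α) / 2)) atTop (nhds 1)) :
    Tendsto
      (fun n : ℕ =>
        (∑' k : ℕ, ψ k * ψ (k + n)) /
          ((∫ x in Ioi (0 : ℝ), x ^ (-(1 + α) / 2) * (1 + x) ^ (-(1 + α) / 2)) *
            (n : ℝ) ^ (-α)))
      atTop (nhds 1) := by
  rw [show -(1 + α) / 2 = -((1 + α) / 2) by ring] at hψ ⊢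
  have hβ0 : 1 / 2 < (1 + α) / 2 := by linarith
  have hβ1 : (1 + α) / 2 < 1 := by linarith
  have key := tendsto_rpow_mul_tsum_mul_comp_add hβ0 hβ1 hψ
  rw [show 2 * ((1 + α) / 2) - 1 = α by ring] at key
  have hI := integral_Ioi_covKernel_pos hβ0 hβ1 one_pos
  convert key.div_const (∫ x in Ioi 0, covKernel ((1 + α) / 2) 1 x) using 2 with n
  · rw [Real.rpow_neg n.cast_nonneg]
    unfold covKernel
    field_simp
  · exact (div_self hI.ne').symm

theorem covariance_asymptotic (α : ℝ) (hα0 : 0 < α) (hα1 : α < 1)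
    (ψ : ℕ → ℝ) (hψ0 : ∀ k, 0 ≤ ψ k)
    (hψ : Tendsto (fun k : ℕ => ψ k / (k : ℝ) ^ (-(1 + α) / 2)) atTop (nhds 1)) :
    Tendsto
      (fun n : ℕ =>
        (∑' k : ℕ, ψ k * ψ (k + n)) /
          ((∫ x in Ioi (0 : ℝ), x ^ (-(1 + α) / 2) * (1 + x) ^ (-(1 + α) / 2)) *
            (n : ℝ) ^ (-α)))
      atTop (nhds 1) :=
  covariance_asymptotic_general α hα0 hα1 ψ hψ
end

section
/- Let H = 1 − α/2 with 0 < α < 1, fix x ≠ 0 and c₁ > 0, and set u = u(T) = 1 − c₁ x T^{−α/2}. With σ₂ = u^H and r = (1 + u^{2H} − (1−u)^{2H})/(2u^H) (for T large so that 0 < u < 1 when x > 0, or u > 1 when x < 0, with |1−u| in place of (1−u)), one has σ₂√(1−r²) ~ |c₁ x|^{1−α/2} T^{−α/2 + α²/4} as T → ∞. -/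
/-!
Write `ε = 1 - u`, `s = |1 - ε|^H` and `b = |ε|^H`. Then `σ₂ = s`, and `1 - r²` factors as
`(b² - (1 - s)²)((1 + s)² - b²) / (2s)²`, so `σ₂ √(1 - r²) / b = √((1 - ((1 - s)/b)²)((1 + s)² - b²)/4)`.
As `ε → 0` we have `s → 1` and `b → 0`, while `1 - s = O(ε) = o(|ε|^H)` because `H < 1`; hence the
square root tends to `1`. Finally, for `ε = c₁ x T^{-α/2}` the normalisation `b` is exactly
`|c₁ x|^H T^{-α/2 + α²/4}`.
-/

open Filter Topology Asymptotics

/-- `σ₂ √(1 - r²)` for fractional Brownian motion `W` of Hurst index `H`, where `σ₂² = Var W(u)` and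
`r = Corr(W(1), W(u))`. -/
noncomputable def fbmCondSD (H u : ℝ) : ℝ :=
  |u| ^ H * √(1 - ((1 + |u| ^ (2 * H) - |1 - u| ^ (2 * H)) / (2 * |u| ^ H)) ^ 2)

lemma mul_sqrt_one_sub_sq_div_eq {s b : ℝ} (hs : 0 < s) (hb : 0 < b) :
    s * √(1 - ((1 + s ^ 2 - b ^ 2) / (2 * s)) ^ 2) / b
      = √((1 - ((1 - s) / b) ^ 2) * (((1 + s) ^ 2 - b ^ 2) / 4)) := by
  have key : (1 - ((1 - s) / b) ^ 2) * (((1 + s) ^ 2 - b ^ 2) / 4)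
      = (s / b) ^ 2 * (1 - ((1 + s ^ 2 - b ^ 2) / (2 * s)) ^ 2) := by
    field_simp
    ring
  rw [key, Real.sqrt_mul (sq_nonneg _), Real.sqrt_sq (div_nonneg hs.le hb.le)]
  ring

lemma fbmCondSD_one_sub_div_eq {H ε : ℝ} (hε0 : ε ≠ 0) (hε1 : ε ≠ 1) :
    fbmCondSD H (1 - ε) / |ε| ^ H
      = √((1 - ((1 - |1 - ε| ^ H) / |ε| ^ H) ^ 2)
          * (((1 + |1 - ε| ^ H) ^ 2 - (|ε| ^ H) ^ 2) / 4)) := by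
  have hsq (v : ℝ) : |v| ^ (2 * H) = (|v| ^ H) ^ 2 := by
    rw [mul_comm, Real.rpow_mul (abs_nonneg v), Real.rpow_two]
  rw [fbmCondSD, sub_sub_cancel, hsq, hsq, mul_sqrt_one_sub_sq_div_eq
    (Real.rpow_pos_of_pos (abs_pos.2 (sub_ne_zero.2 hε1.symm)) H)
    (Real.rpow_pos_of_pos (abs_pos.2 hε0) H)]

lemma isLittleO_id_abs_rpow {p : ℝ} (hp : p < 1) :
    (fun ε : ℝ => ε) =o[𝓝 0] fun ε => |ε| ^ p := by
  have hp' : 1 - p ≠ 0 := sub_ne_zero.2 hp.ne'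
  rw [isLittleO_iff_tendsto fun ε hε =>
    abs_eq_zero.1 ((Real.rpow_eq_zero_iff_of_nonneg (abs_nonneg ε)).1 hε).1]
  rw [tendsto_zero_iff_norm_tendsto_zero]
  have hcont : Tendsto (fun ε : ℝ => |ε| ^ (1 - p)) (𝓝 0) (𝓝 0) := by
    simpa [Real.zero_rpow hp'] using
      (continuous_abs.rpow_const fun _ => Or.inr (sub_nonneg.2 hp.le)).tendsto 0
  refine hcont.congr fun ε => ?_
  rw [Real.norm_eq_abs, abs_div, abs_of_nonneg (Real.rpow_nonneg (abs_nonneg ε) p),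
    Real.rpow_sub' (abs_nonneg ε) hp', Real.rpow_one]

lemma tendsto_div_abs_rpow_of_differentiableAt {f : ℝ → ℝ} {p : ℝ}
    (hf : DifferentiableAt ℝ f 0) (hf0 : f 0 = 0) (hp : p < 1) :
    Tendsto (fun ε => f ε / |ε| ^ p) (𝓝 0) (𝓝 0) := by
  have hO : f =O[𝓝 0] fun ε => ε := by simpa [hf0] using hf.isBigO_sub
  exact (hO.trans_isLittleO (isLittleO_id_abs_rpow hp)).tendsto_div_nhds_zero

lemma tendsto_fbmCondSD_one_sub_div {H : ℝ} (hH0 : 0 < H) (hH1 : H < 1) :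
    Tendsto (fun ε => fbmCondSD H (1 - ε) / |ε| ^ H) (𝓝[≠] 0) (𝓝 1) := by
  have hs : Tendsto (fun ε : ℝ => |1 - ε| ^ H) (𝓝 0) (𝓝 1) := by
    simpa using (((continuous_const (y := (1 : ℝ))).sub continuous_id).abs.rpow_const
      fun _ => Or.inr hH0.le).tendsto 0
  have hb : Tendsto (fun ε : ℝ => |ε| ^ H) (𝓝 0) (𝓝 0) := by
    simpa [Real.zero_rpow hH0.ne'] using
      (continuous_abs.rpow_const fun _ => Or.inr hH0.le).tendsto 0
  have hq : Tendsto (fun ε : ℝ => (1 - |1 - ε| ^ H) / |ε| ^ H) (𝓝 0) (𝓝 0) :=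
    tendsto_div_abs_rpow_of_differentiableAt
      ((differentiableAt_const 1).sub ((((differentiableAt_const 1).sub differentiableAt_id).abs
        (by norm_num)).rpow_const (by norm_num))) (by simp) hH1
  have hlim := (((tendsto_const_nhds (x := (1 : ℝ))).sub (hq.pow 2)).mul
    (((((tendsto_const_nhds (x := (1 : ℝ))).add hs).pow 2).sub (hb.pow 2)).div_const 4)).sqrt
  norm_num at hlim
  refine (hlim.mono_left nhdsWithin_le_nhds).congr' ?_
  filter_upwards [self_mem_nhdsWithin, nhdsWithin_le_nhds (eventually_ne_nhds zero_ne_one)]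
    with ε hε0 hε1
  exact (fbmCondSD_one_sub_div_eq hε0 hε1).symm

lemma tendsto_const_mul_rpow_nhdsNE_zero {c q : ℝ} (hc : c ≠ 0) (hq : q < 0) :
    Tendsto (fun T : ℝ => c * T ^ q) atTop (𝓝[≠] 0) :=
  tendsto_nhdsWithin_iff.2
    ⟨by simpa using (tendsto_rpow_neg_atTop (neg_pos.2 hq)).const_mul c,
      (eventually_gt_atTop 0).mono fun _ hT => mul_ne_zero hc (Real.rpow_pos_of_pos hT q).ne'⟩

theorem conditional_sd_asymptotic (α : ℝ) (hα0 : 0 < α) (hα1 : α < 1)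
    (x : ℝ) (hx : x ≠ 0) (c₁ : ℝ) (hc₁ : 0 < c₁) :
    Tendsto
      (fun T : ℝ =>
        (let H := 1 - α / 2
         let u := 1 - c₁ * x * T ^ (-α / 2)
         let σ₂ := |u| ^ H
         let r := (1 + |u| ^ (2 * H) - |1 - u| ^ (2 * H)) / (2 * σ₂)
         σ₂ * Real.sqrt (1 - r ^ 2)) /
          (|c₁ * x| ^ (1 - α / 2) * T ^ (-α / 2 + α ^ 2 / 4)))
      atTop (nhds 1) := by
  have hε := tendsto_const_mul_rpow_nhdsNE_zero (mul_ne_zero hc₁.ne' hx) (by linarith : -α / 2 < 0)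
  refine ((tendsto_fbmCondSD_one_sub_div (H := 1 - α / 2) (by linarith) (by linarith)).comp
    hε).congr' ?_
  filter_upwards [eventually_gt_atTop 0] with T hT
  have hnorm : |c₁ * x * T ^ (-α / 2)| ^ (1 - α / 2)
      = |c₁ * x| ^ (1 - α / 2) * T ^ (-α / 2 + α ^ 2 / 4) := by
    rw [abs_mul, abs_of_pos (Real.rpow_pos_of_pos hT _),
      Real.mul_rpow (abs_nonneg _) (Real.rpow_nonneg hT.le _), ← Real.rpow_mul hT.le]
    congr 2
    ring
  simp only [Function.comp_apply, hnorm, fbmCondSD]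
end

section
/- Let H ∈ (1/2,1), let g be as above, and define f(t) = (1/k_H)∫_{−∞}^0 ((t−s)^{H−1/2} − (−s)^{H−1/2}) g(s) ds + (1/k_H)∫_0^t (t−s)^{H−1/2} g(s) ds for 0 ≤ t ≤ 1. Then f is continuous and strictly increasing on [0,1] with f(0) = 0 and f(1) = 1. -/
open MeasureTheory Set

/-! With `p = H - 1/2` and the Mandelbrot–Van Ness kernel `K_t(s) = (t - s)₊ ^ p - (-s)₊ ^ p`,
one has `g = K_1 / ‖K_1‖` and `f t = ⟨K_t, K_1⟩ / ‖K_1‖²`, so `f 0 = 0` and `f 1 = 1`.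
For `0 ≤ t₁ < t₂ ≤ 1` we have `0 ≤ K_{t₁} ≤ K_{t₂} ≤ K_1` and `K_{t₂} > 0 = K_{t₁}` on `(t₁, t₂)`,
which gives strict monotonicity; continuity follows by dominated convergence with the bound `K_1²`,
integrable at `-∞` because `K_1(s) = O(|s| ^ (p - 1))` and `p < 1/2`. -/

lemma Real.one_add_rpow_sub_rpow_le {p x : ℝ} (hp0 : 0 ≤ p) (hp1 : p ≤ 1) (hx : 0 < x) :
    (1 + x) ^ p - x ^ p ≤ p * x ^ (p - 1) := by
  have hbernoulli : (1 + x⁻¹) ^ p ≤ 1 + p * x⁻¹ :=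
    rpow_one_add_le_one_add_mul_self (by linarith [inv_pos.2 hx]) hp0 hp1
  have hfactor : (1 + x) ^ p = x ^ p * (1 + x⁻¹) ^ p := by
    rw [← Real.mul_rpow hx.le (by positivity), mul_add, mul_one, mul_inv_cancel₀ hx.ne', add_comm]
  calc (1 + x) ^ p - x ^ p = x ^ p * ((1 + x⁻¹) ^ p - 1) := by rw [hfactor]; ring
    _ ≤ x ^ p * (p * x⁻¹) := by gcongr; linarith
    _ = p * x ^ (p - 1) := by rw [Real.rpow_sub_one hx.ne']; ring

lemma integrableOn_Iic_comp_neg {E : Type*} [NormedAddCommGroup E] {f : ℝ → E} {a : ℝ}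
    (hf : IntegrableOn f (Ici a)) : IntegrableOn (fun s ↦ f (-s)) (Iic (-a)) := by
  simpa [Function.comp_def] using ((Measure.measurePreserving_neg (volume : Measure ℝ))
    |>.integrableOn_comp_preimage (Homeomorph.neg ℝ).measurableEmbedding).2 hf

lemma integrableOn_Iic_one_sub_rpow_sub_rpow_sq {p : ℝ} (hp0 : 0 < p) (hp : p < 1 / 2) :
    IntegrableOn (fun s : ℝ ↦ ((1 - s) ^ p - (-s) ^ p) ^ 2) (Iic 0) := by
  have hcont : Continuous fun s : ℝ ↦ ((1 - s) ^ p - (-s) ^ p) ^ 2 := by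
    fun_prop (disch := exact hp0.le)
  rw [← Iic_union_Ioc_eq_Iic (show (-1 : ℝ) ≤ 0 by norm_num), integrableOn_union]
  refine ⟨?_, hcont.integrableOn_Icc.mono_set Ioc_subset_Icc_self⟩
  have hdom : IntegrableOn (fun s : ℝ ↦ p ^ 2 * (-s) ^ (2 * p - 2)) (Iic (-1)) :=
    integrableOn_Iic_comp_neg <| (integrableOn_Ici_iff_integrableOn_Ioi).2 <|
      (integrableOn_Ioi_rpow_of_lt (by linarith) one_pos).const_mul _
  refine hdom.mono' hcont.aestronglyMeasurable.restrict ?_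
  filter_upwards [ae_restrict_mem measurableSet_Iic] with s (hs : s ≤ -1)
  have hs0 : 0 < -s := by linarith
  have hdiff_nonneg : 0 ≤ (1 + -s) ^ p - (-s) ^ p :=
    sub_nonneg.2 (Real.rpow_le_rpow hs0.le (by linarith) hp0.le)
  rw [Real.norm_eq_abs, abs_sq, show 1 - s = 1 + -s by ring]
  calc ((1 + -s) ^ p - (-s) ^ p) ^ 2 ≤ (p * (-s) ^ (p - 1)) ^ 2 :=
        pow_le_pow_left₀ hdiff_nonneg
          (Real.one_add_rpow_sub_rpow_le hp0.le (by linarith) hs0) 2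
    _ = p ^ 2 * (-s) ^ (2 * p - 2) := by
        rw [mul_pow, ← Real.rpow_mul_natCast hs0.le]; ring_nf

namespace MandelbrotVanNess

variable {p s : ℝ}

lemma monotoneOn_kernel (hp : 0 ≤ p) (hs : s ≤ 0) :
    MonotoneOn (fun t : ℝ ↦ (t - s) ^ p - (-s) ^ p) (Ici 0) := fun t₁ ht₁ _ _ h ↦
  sub_le_sub_right (Real.rpow_le_rpow (by linarith [mem_Ici.1 ht₁]) (by linarith) hp) _

lemma kernel_nonneg {t : ℝ} (hp : 0 ≤ p) (hs : s ≤ 0) (ht : 0 ≤ t) :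
    0 ≤ (t - s) ^ p - (-s) ^ p := by
  simpa using monotoneOn_kernel hp hs self_mem_Ici ht ht

lemma norm_kernel_mul_kernel_one_le {t : ℝ} (hp : 0 ≤ p) (hs : s ≤ 0) (ht : t ∈ Icc (0 : ℝ) 1) :
    ‖((t - s) ^ p - (-s) ^ p) * ((1 - s) ^ p - (-s) ^ p)‖ ≤ ((1 - s) ^ p - (-s) ^ p) ^ 2 := by
  have hK₁ := kernel_nonneg hp hs zero_le_one
  have hKt := kernel_nonneg hp hs ht.1
  rw [Real.norm_eq_abs, abs_of_nonneg (mul_nonneg hKt hK₁), sq]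
  exact mul_le_mul_of_nonneg_right
    (monotoneOn_kernel hp hs ht.1 (mem_Ici.2 zero_le_one) ht.2) hK₁

lemma integrableOn_kernel_mul_kernel_one (hp0 : 0 < p) (hp : p < 1 / 2) {t : ℝ}
    (ht : t ∈ Icc (0 : ℝ) 1) :
    IntegrableOn (fun s ↦ ((t - s) ^ p - (-s) ^ p) * ((1 - s) ^ p - (-s) ^ p)) (Iic 0) :=
  (integrableOn_Iic_one_sub_rpow_sub_rpow_sq hp0 hp).mono'
    (Continuous.aestronglyMeasurable (by fun_prop (disch := exact hp0.le))).restrict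
    ((ae_restrict_mem measurableSet_Iic).mono fun _ hs ↦
      norm_kernel_mul_kernel_one_le hp0.le hs ht)

/-- For `0 ≤ t ≤ 1`, `kernelInner p t` is the `L²(ℝ)` inner product of the kernels
`s ↦ (t - s)₊ ^ p - (-s)₊ ^ p` at times `t` and `1`, split into its parts over `s ≤ 0`
(`kernelInnerIic`) and over `0 < s ≤ t` (`kernelInnerIoc`). -/
noncomputable def kernelInnerIic (p t : ℝ) : ℝ :=
  ∫ s in Iic 0, ((t - s) ^ p - (-s) ^ p) * ((1 - s) ^ p - (-s) ^ p)

noncomputable def kernelInnerIoc (p t : ℝ) : ℝ := ∫ s in 0..t, (t - s) ^ p * (1 - s) ^ p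

noncomputable def kernelInner (p t : ℝ) : ℝ := kernelInnerIic p t + kernelInnerIoc p t

lemma continuousOn_kernelInnerIic (hp0 : 0 < p) (hp : p < 1 / 2) :
    ContinuousOn (kernelInnerIic p) (Icc 0 1) := by
  refine continuousOn_of_dominated (fun t _ ↦ ?_) (fun t ht ↦ ?_)
    (integrableOn_Iic_one_sub_rpow_sub_rpow_sq hp0 hp) (.of_forall fun s ↦ ?_)
  · exact (Continuous.aestronglyMeasurable (by fun_prop (disch := exact hp0.le))).restrict
  · filter_upwards [ae_restrict_mem measurableSet_Iic] with s hs
    exact norm_kernel_mul_kernel_one_le hp0.le hs ht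
  · exact Continuous.continuousOn (by fun_prop (disch := exact hp0.le))

lemma monotoneOn_kernelInnerIic (hp0 : 0 < p) (hp : p < 1 / 2) :
    MonotoneOn (kernelInnerIic p) (Icc 0 1) := by
  intro t₁ ht₁ t₂ ht₂ h
  refine setIntegral_mono_on (integrableOn_kernel_mul_kernel_one hp0 hp ht₁)
    (integrableOn_kernel_mul_kernel_one hp0 hp ht₂) measurableSet_Iic fun s hs ↦ ?_
  exact mul_le_mul_of_nonneg_right (monotoneOn_kernel hp0.le hs ht₁.1 ht₂.1 h)
    (kernel_nonneg hp0.le hs zero_le_one)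

lemma continuous_kernelInnerIoc (hp : 0 ≤ p) : Continuous (kernelInnerIoc p) :=
  intervalIntegral.continuous_parametric_intervalIntegral_of_continuous
    (by fun_prop (disch := exact hp)) continuous_id

lemma strictMonoOn_kernelInnerIoc (hp : 0 < p) : StrictMonoOn (kernelInnerIoc p) (Icc 0 1) := by
  intro t₁ ht₁ t₂ ht₂ h
  have hcont : ∀ t : ℝ, Continuous fun s : ℝ ↦ (t - s) ^ p * (1 - s) ^ p := fun t ↦ by
    fun_prop (disch := exact hp.le)
  have hle : kernelInnerIoc p t₁ ≤ ∫ s in 0..t₁, (t₂ - s) ^ p * (1 - s) ^ p :=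
    intervalIntegral.integral_mono_on ht₁.1 ((hcont t₁).intervalIntegrable _ _)
      ((hcont t₂).intervalIntegrable _ _) fun s hs ↦
        mul_le_mul_of_nonneg_right (Real.rpow_le_rpow (by linarith [hs.2]) (by linarith) hp.le)
          (Real.rpow_nonneg (by linarith [hs.2, ht₁.2]) p)
  have hpos : 0 < ∫ s in t₁..t₂, (t₂ - s) ^ p * (1 - s) ^ p :=
    intervalIntegral.intervalIntegral_pos_of_pos_on ((hcont t₂).intervalIntegrable _ _)
      (fun s hs ↦ mul_pos (Real.rpow_pos_of_pos (by linarith [hs.2]) p)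
        (Real.rpow_pos_of_pos (by linarith [hs.2, ht₂.2]) p)) h
  calc kernelInnerIoc p t₁ < (∫ s in 0..t₁, (t₂ - s) ^ p * (1 - s) ^ p) +
        ∫ s in t₁..t₂, (t₂ - s) ^ p * (1 - s) ^ p := by linarith
    _ = kernelInnerIoc p t₂ := intervalIntegral.integral_add_adjacent_intervals
        ((hcont t₂).intervalIntegrable _ _) ((hcont t₂).intervalIntegrable _ _)

lemma continuousOn_kernelInner (hp0 : 0 < p) (hp : p < 1 / 2) :
    ContinuousOn (kernelInner p) (Icc 0 1) :=
  (continuousOn_kernelInnerIic hp0 hp).add (continuous_kernelInnerIoc hp0.le).continuousOn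

lemma strictMonoOn_kernelInner (hp0 : 0 < p) (hp : p < 1 / 2) :
    StrictMonoOn (kernelInner p) (Icc 0 1) := fun _ ht₁ _ ht₂ h ↦
  add_lt_add_of_le_of_lt (monotoneOn_kernelInnerIic hp0 hp ht₁ ht₂ h.le)
    (strictMonoOn_kernelInnerIoc hp0 ht₁ ht₂ h)

@[simp]
lemma kernelInner_zero : kernelInner p 0 = 0 := by
  simp [kernelInner, kernelInnerIic, kernelInnerIoc]

lemma kernelInner_one_pos (hp0 : 0 < p) (hp : p < 1 / 2) : 0 < kernelInner p 1 := by
  simpa using strictMonoOn_kernelInner hp0 hp (left_mem_Icc.2 zero_le_one)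
    (right_mem_Icc.2 zero_le_one) zero_lt_one

lemma kernelInner_one (p : ℝ) : kernelInner p 1 =
    (∫ s in Iic 0, ((1 - s) ^ p - (-s) ^ p) ^ 2) + ∫ s in 0..1, (1 - s) ^ (2 * p) := by
  refine congrArg₂ (· + ·) (integral_congr_ae (.of_forall fun s ↦ (sq _).symm))
    (intervalIntegral.integral_congr fun s hs ↦ ?_)
  rw [uIcc_of_le zero_le_one] at hs
  rw [← sq, ← Real.rpow_mul_natCast (by linarith [hs.2]), Nat.cast_ofNat, mul_comm]

lemma integral_kernel_mul_eq {c t : ℝ} {g : ℝ → ℝ}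
    (hg_nonpos : ∀ s ≤ 0, g s = 1 / c * ((1 - s) ^ p - (-s) ^ p))
    (hg_pos : ∀ s > 0, g s = 1 / c * (1 - s) ^ p) (ht : 0 ≤ t) :
    1 / c * (∫ s in Iic (0 : ℝ), ((t - s) ^ p - (-s) ^ p) * g s) +
      1 / c * ∫ s in (0 : ℝ)..t, (t - s) ^ p * g s = kernelInner p t / c ^ 2 := by
  have hIic : ∫ s in Iic (0 : ℝ), ((t - s) ^ p - (-s) ^ p) * g s = 1 / c * kernelInnerIic p t := by
    rw [kernelInnerIic, ← integral_const_mul]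
    refine setIntegral_congr_fun measurableSet_Iic fun s hs ↦ ?_
    rw [hg_nonpos s hs]; ring
  have hIoc : ∫ s in (0 : ℝ)..t, (t - s) ^ p * g s = 1 / c * kernelInnerIoc p t := by
    rw [kernelInnerIoc, ← intervalIntegral.integral_const_mul]
    refine intervalIntegral.integral_congr_ae (.of_forall fun s hs ↦ ?_)
    rw [uIoc_of_le ht] at hs
    rw [hg_pos s hs.1]; ring
  rw [hIic, hIoc, kernelInner]; ring

end MandelbrotVanNess

open MandelbrotVanNess in
theorem extremal_f_increasing (H : ℝ) (hH1 : 1 / 2 < H) (hH2 : H < 1) :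
    let kH : ℝ := Real.sqrt
      ((∫ s in Iic (0 : ℝ), ((1 - s) ^ (H - 1 / 2) - (-s) ^ (H - 1 / 2)) ^ 2) +
        ∫ s in (0 : ℝ)..1, (1 - s) ^ (2 * H - 1))
    let g : ℝ → ℝ := fun s =>
      if s ≤ 0 then (1 / kH) * ((1 - s) ^ (H - 1 / 2) - (-s) ^ (H - 1 / 2))
      else (1 / kH) * (1 - s) ^ (H - 1 / 2)
    let f : ℝ → ℝ := fun t =>
      (1 / kH) * (∫ s in Iic (0 : ℝ), ((t - s) ^ (H - 1 / 2) - (-s) ^ (H - 1 / 2)) * g s) +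
        (1 / kH) * ∫ s in (0 : ℝ)..t, (t - s) ^ (H - 1 / 2) * g s
    ContinuousOn f (Icc 0 1) ∧ StrictMonoOn f (Icc 0 1) ∧ f 0 = 0 ∧ f 1 = 1 := by
  intro kH g f
  have hp0 : 0 < H - 1 / 2 := by linarith
  have hp : H - 1 / 2 < 1 / 2 := by linarith
  have hpos := kernelInner_one_pos hp0 hp
  have hkH : kH ^ 2 = kernelInner (H - 1 / 2) 1 := by
    have hnonneg := hpos.le
    rw [kernelInner_one, show 2 * (H - 1 / 2) = 2 * H - 1 by ring] at hnonneg ⊢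
    exact Real.sq_sqrt hnonneg
  have hf : EqOn (fun t ↦ kernelInner (H - 1 / 2) t / kernelInner (H - 1 / 2) 1) f (Icc 0 1) :=
    fun t ht ↦ by
      rw [← hkH]
      exact (integral_kernel_mul_eq (fun s hs ↦ if_pos hs) (fun s hs ↦ if_neg hs.not_ge) ht.1).symm
  refine ⟨((continuousOn_kernelInner hp0 hp).div_const _).congr hf.symm, ?_, ?_, ?_⟩
  · exact StrictMonoOn.congr (fun _ ht₁ _ ht₂ h ↦
      div_lt_div_of_pos_right (strictMonoOn_kernelInner hp0 hp ht₁ ht₂ h) hpos) hf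
  · rw [← hf (left_mem_Icc.2 zero_le_one)]; simp
  · rw [← hf (right_mem_Icc.2 zero_le_one)]; exact div_self hpos.ne'
end
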